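/- Let · : A ⊗ H → A be a symmetric right partial action of a Hopf algebra H on an algebra A. Then the product (k⊗b)(h⊗a) = kh_(1) ⊗ (b·h_(2))a on H⊗A is associative, and the subspace H#A := (1_H⊗1_A)(H⊗A), spanned by elements h#a = h_(1) ⊗ (1_A·h_(2))a, is a unital algebra with unit 1_H#1_A. -/

import Mathlib

open TensorProduct

section Smash

variable {k H A : Type*} [CommRing k] [Ring H] [HopfAlgebra k H] [Ring A] [Algebra k A]

/-- The smash-type multiplication on `H ⊗ A` associated to a bilinear multiplication
`mH` on `H` (e.g. the given or the opposite one) and a right action-type map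
`ract : A →ₗ H →ₗ A`:  on pure tensors,
`(g ⊗ b)(h ⊗ a) = Σ mH g h₍₁₎ ⊗ (b·h₍₂₎) a`. -/
noncomputable def rsmashMul (mH : H →ₗ[k] H →ₗ[k] H) (ract : A →ₗ[k] H →ₗ[k] A) :
    (H ⊗[k] A) ⊗[k] (H ⊗[k] A) →ₗ[k] H ⊗[k] A :=
  (TensorProduct.map (TensorProduct.lift mH)
      ((LinearMap.mul' k A) ∘ₗ (LinearMap.rTensor A (TensorProduct.lift ract)) ∘ₗ
        (TensorProduct.assoc k A H A).symm.toLinearMap)) ∘ₗ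
  (TensorProduct.tensorTensorTensorComm k H A H (H ⊗[k] A)).toLinearMap ∘ₗ
  (LinearMap.lTensor (H ⊗[k] A)
      ((TensorProduct.assoc k H H A).toLinearMap ∘ₗ
        (LinearMap.rTensor A (Coalgebra.comul (R := k)))))

/-- The curried (bilinear) form of the smash-type multiplication. -/
noncomputable def rsmashMul₂ (mH : H →ₗ[k] H →ₗ[k] H) (ract : A →ₗ[k] H →ₗ[k] A) :
    (H ⊗[k] A) →ₗ[k] (H ⊗[k] A) →ₗ[k] H ⊗[k] A :=
  TensorProduct.curry (rsmashMul mH ract)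

/-- The right partial smash product `H # A := (1_H ⊗ 1_A)(H ⊗ A)`, spanned by the
elements `h # a := (1 ⊗ 1)(h ⊗ a) = Σ h₍₁₎ ⊗ (1·h₍₂₎)a`. -/
noncomputable def rsmashSub (mH : H →ₗ[k] H →ₗ[k] H) (ract : A →ₗ[k] H →ₗ[k] A) :
    Submodule k (H ⊗[k] A) :=
  Submodule.span k
    {z | ∃ (h : H) (a : A), z = rsmashMul₂ mH ract ((1 : H) ⊗ₜ (1 : A)) (h ⊗ₜ a)}

end Smash

/-- Sweedler-style sum `h ↦ Σ f(h₍₁₎) * g(h₍₂₎)`. -/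
noncomputable def sweedler {k H B : Type*} [CommRing k] [Ring H] [HopfAlgebra k H]
    [AddCommGroup B] [Module k B]
    (mul : B →ₗ[k] B →ₗ[k] B) (f g : H →ₗ[k] B) : H →ₗ[k] B :=
  TensorProduct.lift ((mul ∘ₗ f).compl₂ g) ∘ₗ Coalgebra.comul

/-- A symmetric right partial action of a Hopf algebra `H` on `A`:
(RPA1) `a·1 = a`; (RPA2) `(ab)·h = (a·h₍₁₎)(b·h₍₂₎)`;
(RPA3) `(a·g)·h = (a·gh₍₁₎)(1·h₍₂₎) = (1·h₍₁₎)(a·gh₍₂₎)`. -/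
structure IsRightPartialAction (k : Type*) {H A : Type*} [CommRing k] [Ring H]
    [HopfAlgebra k H] [Ring A] [Algebra k A] (ract : A →ₗ[k] H →ₗ[k] A) : Prop where
  rpa1 : ∀ a : A, ract a 1 = a
  rpa2 : ∀ (a b : A) (h : H),
    ract (a * b) h = sweedler (LinearMap.mul k A) (ract a) (ract b) h
  rpa3 : ∀ (a : A) (g h : H),
    ract (ract a g) h =
      sweedler (LinearMap.mul k A) ((ract a) ∘ₗ LinearMap.mulLeft k g) (ract 1) h
  rpa3' : ∀ (a : A) (g h : H),
    ract (ract a g) h =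
      sweedler (LinearMap.mul k A) (ract 1) ((ract a) ∘ₗ LinearMap.mulLeft k g) h

/-!
The heart of the matter is the identity `((b·x) a)·l = (b·x l₍₁₎)(a·l₍₂₎)`. By (RPA2) and (RPA3)
its left side is the convolution product `((b·x(-)) ⋆ (1·-)) ⋆ (a·-)` of maps `H → A`, so it
follows from associativity of convolution and `(1·l₍₁₎)(a·l₍₂₎) = (1a)·l`. In terms of left
multiplications `L` on `H ⊗ A` it reads `L(g ⊗ (b·x)a) = Lˣ(g ⊗ b) ∘ L(1 ⊗ a)`, where `Lˣ` is the
product for the twisted action `b·ˣh = b·xh`. Multiplicativity of `Δ` gives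
`L(g ⊗ b) ∘ L(h ⊗ a) = Σ L^{h₍₂₎}(gh₍₁₎ ⊗ b) ∘ L(1 ⊗ a)`, and associativity follows.
As `1 ⊗ 1` is a right unit, `H # A` is the range of left multiplication by the idempotent `1 ⊗ 1`,
hence a subalgebra with unit `1 ⊗ 1`.
-/

open Coalgebra WithConv

section SmashProduct

variable {k H A : Type*} [CommRing k] [Ring H] [HopfAlgebra k H] [Ring A] [Algebra k A]

theorem sweedler_mul_eq_convMul (f g : H →ₗ[k] A) :
    sweedler (LinearMap.mul k A) f g = (toConv f * toConv g).ofConv := by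
  ext h
  rw [(ℛ k h).convMul_apply, sweedler, LinearMap.comp_apply, ← (ℛ k h).eq, map_sum]
  simp

theorem sweedler_mul_assoc (f₁ f₂ f₃ : H →ₗ[k] A) :
    sweedler (LinearMap.mul k A) (sweedler (LinearMap.mul k A) f₁ f₂) f₃ =
      sweedler (LinearMap.mul k A) f₁ (sweedler (LinearMap.mul k A) f₂ f₃) := by
  simp only [sweedler_mul_eq_convMul, toConv_ofConv, mul_assoc]

theorem sweedler_mul_apply_eq_sum (f g : H →ₗ[k] A) {h : H} {ι : Type*} (ρ : Repr k h ι) :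
    sweedler (LinearMap.mul k A) f g h = ∑ i ∈ ρ.index, f (ρ.left i) * g (ρ.right i) := by
  rw [sweedler_mul_eq_convMul, ρ.convMul_apply]

theorem IsRightPartialAction.ract_ract_mul {ract : A →ₗ[k] H →ₗ[k] A}
    (hr : IsRightPartialAction k ract) (b a : A) (x : H) :
    ract (ract b x * a) =
      sweedler (LinearMap.mul k A) (ract b ∘ₗ LinearMap.mulLeft k x) (ract a) := by
  have rpa2 : ∀ a b : A, ract (a * b) = sweedler (LinearMap.mul k A) (ract a) (ract b) :=
    fun a b => LinearMap.ext (hr.rpa2 a b)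
  rw [rpa2, LinearMap.ext (hr.rpa3 b x), sweedler_mul_assoc, ← rpa2, one_mul]

theorem rsmashMul₂_tmul_tmul (mH : H →ₗ[k] H →ₗ[k] H) (ract : A →ₗ[k] H →ₗ[k] A)
    (g : H) (b : A) {h : H} (a : A) {ι : Type*} (ρ : Repr k h ι) :
    rsmashMul₂ mH ract (g ⊗ₜ b) (h ⊗ₜ a) =
      ∑ i ∈ ρ.index, mH g (ρ.left i) ⊗ₜ[k] (ract b (ρ.right i) * a) := by
  simp [rsmashMul₂, rsmashMul, ← ρ.eq, sum_tmul, tmul_sum]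

theorem rsmashSub_eq_range (mH : H →ₗ[k] H →ₗ[k] H) (ract : A →ₗ[k] H →ₗ[k] A) :
    rsmashSub mH ract = LinearMap.range (rsmashMul₂ mH ract (1 ⊗ₜ 1)) := by
  rw [LinearMap.range_eq_map, ← span_tmul_eq_top, Submodule.map_span, rsmashSub]
  congr 1
  ext z
  simp [eq_comm]

variable {ract : A →ₗ[k] H →ₗ[k] A}

local notation "M" => rsmashMul₂ (LinearMap.mul k H)

theorem rsmashMul₂_tmul_eq_rTensor_mulLeft (h : H) (a : A) :
    M ract (h ⊗ₜ a) = (LinearMap.mulLeft k h).rTensor A ∘ₗ M ract (1 ⊗ₜ a) := by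
  ext l c
  simp [rsmashMul₂_tmul_tmul _ _ _ _ _ (ℛ k l)]

theorem rsmashMul₂_tmul_comp_rTensor_mulLeft (g : H) (b : A) {h : H} {ι : Type*}
    (ρ : Repr k h ι) :
    M ract (g ⊗ₜ b) ∘ₗ (LinearMap.mulLeft k h).rTensor A =
      ∑ i ∈ ρ.index, M (ract.compl₂ (LinearMap.mulLeft k (ρ.right i))) ((g * ρ.left i) ⊗ₜ b) := by
  refine TensorProduct.ext' fun l c => ?_
  rw [LinearMap.sum_apply]
  simp [rsmashMul₂_tmul_tmul _ _ _ _ _ (ρ.mul (ℛ k l)), rsmashMul₂_tmul_tmul _ _ _ _ _ (ℛ k l),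
    Finset.sum_product, mul_assoc]

theorem IsRightPartialAction.rsmashMul₂_tmul_ract_mul_eq_comp (hr : IsRightPartialAction k ract)
    (g x : H) (b a : A) :
    M ract (g ⊗ₜ (ract b x * a)) =
      M (ract.compl₂ (LinearMap.mulLeft k x)) (g ⊗ₜ b) ∘ₗ M ract (1 ⊗ₜ a) := by
  refine TensorProduct.ext' fun l c => ?_
  let ρ := ℛ k l
  have coassoc := congrArg (map (LinearMap.mulLeft k g) (LinearMap.mul' k A ∘ₗ
      map (ract b ∘ₗ LinearMap.mulLeft k x) (LinearMap.mulRight k c ∘ₗ ract a)))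
    (sum_tmul_tmul_eq ρ (fun j => ℛ k (ρ.left j)) (fun j => ℛ k (ρ.right j)))
  simp only [map_sum, map_tmul, LinearMap.comp_apply, LinearMap.mul'_apply,
    LinearMap.mulLeft_apply, LinearMap.mulRight_apply] at coassoc
  simp only [LinearMap.comp_apply, rsmashMul₂_tmul_tmul _ _ _ _ _ ρ, map_sum, hr.ract_ract_mul,
    sweedler_mul_apply_eq_sum _ _ (ℛ k (ρ.right _)), LinearMap.mul_apply', one_mul]
  simp only [rsmashMul₂_tmul_tmul _ _ _ _ _ (ℛ k (ρ.left _)), LinearMap.compl₂_apply,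
    LinearMap.mulLeft_apply, LinearMap.mul_apply', Finset.sum_mul, tmul_sum, mul_assoc]
  exact coassoc.symm

theorem IsRightPartialAction.rsmashMul₂_tmul_tmul_eq_comp (hr : IsRightPartialAction k ract)
    (g h : H) (b a : A) :
    M ract (M ract (g ⊗ₜ b) (h ⊗ₜ a)) = M ract (g ⊗ₜ b) ∘ₗ M ract (h ⊗ₜ a) := by
  refine LinearMap.ext fun w => ?_
  rw [rsmashMul₂_tmul_eq_rTensor_mulLeft h a, LinearMap.comp_apply, LinearMap.comp_apply,
    ← LinearMap.comp_apply (M ract (g ⊗ₜ b)), rsmashMul₂_tmul_comp_rTensor_mulLeft g b (ℛ k h),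
    rsmashMul₂_tmul_tmul _ _ _ _ _ (ℛ k h), map_sum]
  simp only [LinearMap.sum_apply, LinearMap.mul_apply', hr.rsmashMul₂_tmul_ract_mul_eq_comp,
    LinearMap.comp_apply]

theorem IsRightPartialAction.rsmashMul₂_assoc (hr : IsRightPartialAction k ract)
    (x y z : H ⊗[k] A) : M ract (M ract x y) z = M ract x (M ract y z) := by
  induction x using TensorProduct.induction_on with
  | zero => simp
  | add x₁ x₂ h₁ h₂ => simp only [map_add, LinearMap.add_apply, h₁, h₂]
  | tmul g b =>
    induction y using TensorProduct.induction_on with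
    | zero => simp
    | add y₁ y₂ h₁ h₂ => simp only [map_add, LinearMap.add_apply, h₁, h₂]
    | tmul h a => rw [hr.rsmashMul₂_tmul_tmul_eq_comp, LinearMap.comp_apply]

theorem IsRightPartialAction.rsmashMul₂_apply_one_tmul_one (hr : IsRightPartialAction k ract)
    (z : H ⊗[k] A) : M ract z (1 ⊗ₜ 1) = z := by
  induction z using TensorProduct.induction_on with
  | zero => simp
  | add z₁ z₂ h₁ h₂ => rw [map_add, LinearMap.add_apply, h₁, h₂]
  | tmul g b =>
    simp [rsmashMul₂, rsmashMul, Bialgebra.comul_one, Algebra.TensorProduct.one_def, hr.rpa1]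

end SmashProduct

/-- For a symmetric right partial action of `H` on `A`, the product
`(g⊗b)(h⊗a) = gh₍₁₎ ⊗ (b·h₍₂₎)a` on `H ⊗ A` is associative, and the subspace
`H # A = (1⊗1)(H⊗A)`, spanned by the elements `h#a = h₍₁₎ ⊗ (1·h₍₂₎)a`, is closed
under the product and is a unital algebra with unit `1#1`. -/
theorem rightPartialSmashProduct_is_unital_algebra
    {k H A : Type*} [CommRing k] [Ring H] [HopfAlgebra k H] [Ring A] [Algebra k A]
    (ract : A →ₗ[k] H →ₗ[k] A) (hract : IsRightPartialAction k ract) :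
    ∀ mulB : (H ⊗[k] A) →ₗ[k] (H ⊗[k] A) →ₗ[k] H ⊗[k] A,
      mulB = rsmashMul₂ (LinearMap.mul k H) ract →
    ∀ u : H ⊗[k] A, u = mulB ((1 : H) ⊗ₜ (1 : A)) ((1 : H) ⊗ₜ (1 : A)) →
      (∀ x y z : H ⊗[k] A, mulB (mulB x y) z = mulB x (mulB y z)) ∧
      (∀ x ∈ rsmashSub (LinearMap.mul k H) ract, ∀ y ∈ rsmashSub (LinearMap.mul k H) ract,
        mulB x y ∈ rsmashSub (LinearMap.mul k H) ract) ∧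
      (u ∈ rsmashSub (LinearMap.mul k H) ract) ∧
      (∀ z ∈ rsmashSub (LinearMap.mul k H) ract, mulB u z = z ∧ mulB z u = z) := by
  rintro _ rfl u rfl
  simp only [rsmashSub_eq_range, LinearMap.mem_range, hract.rsmashMul₂_apply_one_tmul_one,
    and_true]
  refine ⟨hract.rsmashMul₂_assoc, ?_, ⟨_, hract.rsmashMul₂_apply_one_tmul_one _⟩, ?_⟩
  · rintro _ ⟨w, rfl⟩ y -
    exact ⟨_, (hract.rsmashMul₂_assoc _ _ _).symm⟩
  · rintro _ ⟨w, rfl⟩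
    rw [← hract.rsmashMul₂_assoc, hract.rsmashMul₂_apply_one_tmul_one]
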